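/- arXiv:2005.05867 — 3 statements merged into one kernel-verified Lean document; each statement's English description precedes it below -/
import Mathlib

section
/- Let B(t,x) = (1/2)·log( sqrt((1 - e^{2t})(1 - x)(1 + e^{2t} - x(1 - e^{2t}))) - x(1 - e^{2t}) + 1 ) - t. Then B(0,x) = 0 for every x ∈ [-1,1], and for every fixed t < 0 the function x ↦ B(t,x) is strictly decreasing on [-1,1]; in particular its maximum over [-1,1] is B(t,-1) = log(1 + sqrt(1 - e^{2t})) - t. -/
/-!
With `e = exp (2t)`, `Bfun t x = ½ log (bellmanArg e x) - t`, and `bellmanArg e x` is the square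
root of a product of two factors that are nonnegative and antitone on `x ≤ 1`, plus the strictly
decreasing affine term `1 - x (1 - e)`. For `t < 0` it is positive on `x ≤ 1`, so `Bfun t` is
strictly decreasing there; at `x = -1` it is the perfect square `(1 + √(1 - e))²`.
-/

noncomputable def Bfun (t x : ℝ) : ℝ :=
  (1 / 2) * Real.log
      (Real.sqrt ((1 - Real.exp (2 * t)) * (1 - x) *
          (1 + Real.exp (2 * t) - x * (1 - Real.exp (2 * t)))) -
        x * (1 - Real.exp (2 * t)) + 1) - t

open Real Set

noncomputable def bellmanArg (e x : ℝ) : ℝ :=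
  √((1 - e) * (1 - x) * (1 + e - x * (1 - e))) - x * (1 - e) + 1

lemma Bfun_eq_bellmanArg (t x : ℝ) : Bfun t x = 1 / 2 * log (bellmanArg (exp (2 * t)) x) - t :=
  rfl

lemma Bfun_zero (x : ℝ) : Bfun 0 x = 0 := by
  simp [Bfun]

lemma bellmanArg_pos {e x : ℝ} (he₀ : 0 < e) (he₁ : e ≤ 1) (hx : x ≤ 1) :
    0 < bellmanArg e x := by
  have : x * (1 - e) ≤ 1 - e := mul_le_of_le_one_left (by linarith) hx
  unfold bellmanArg
  linarith [sqrt_nonneg ((1 - e) * (1 - x) * (1 + e - x * (1 - e)))]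

lemma strictAntiOn_bellmanArg {e : ℝ} (he₀ : 0 ≤ e) (he₁ : e < 1) :
    StrictAntiOn (bellmanArg e) (Iic 1) := by
  intro x hx y hy hxy
  have hfactor : 0 ≤ 1 + e - y * (1 - e) := by nlinarith [mem_Iic.mp hy]
  have hsqrt : √((1 - e) * (1 - y) * (1 + e - y * (1 - e))) ≤
      √((1 - e) * (1 - x) * (1 + e - x * (1 - e))) := by
    gcongr
    exact mul_nonneg (by linarith) (sub_nonneg.mpr hx)
  have hlin : x * (1 - e) < y * (1 - e) := mul_lt_mul_of_pos_right hxy (by linarith)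
  unfold bellmanArg
  linarith

lemma bellmanArg_neg_one {e : ℝ} (he : e ≤ 1) : bellmanArg e (-1) = (1 + √(1 - e)) ^ 2 := by
  have hsqrt : √((1 - e) * (1 - -1) * (1 + e - -1 * (1 - e))) = 2 * √(1 - e) := by
    rw [show (1 - e) * (1 - -1) * (1 + e - -1 * (1 - e)) = 2 ^ 2 * (1 - e) by ring,
      sqrt_mul (by positivity), sqrt_sq zero_le_two]
  rw [bellmanArg, hsqrt, add_sq, sq_sqrt (by linarith)]
  ring

lemma strictAntiOn_Bfun {t : ℝ} (ht : t < 0) : StrictAntiOn (Bfun t) (Iic 1) := by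
  have he₁ : exp (2 * t) < 1 := exp_lt_one_iff.mpr (by linarith)
  intro x hx y hy hxy
  have hlog := strictMonoOn_log (bellmanArg_pos (exp_pos _) he₁.le hy)
    (bellmanArg_pos (exp_pos _) he₁.le hx)
    (strictAntiOn_bellmanArg (exp_pos _).le he₁ hx hy hxy)
  rw [Bfun_eq_bellmanArg, Bfun_eq_bellmanArg]
  linarith

lemma Bfun_neg_one {t : ℝ} (ht : t ≤ 0) :
    Bfun t (-1) = log (1 + √(1 - exp (2 * t))) - t := by
  rw [Bfun_eq_bellmanArg, bellmanArg_neg_one (exp_le_one_iff.mpr (by linarith)), log_pow]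
  push_cast
  ring

theorem stmt3 :
    (∀ x ∈ Set.Icc (-1 : ℝ) 1, Bfun 0 x = 0) ∧
    (∀ t : ℝ, t < 0 →
      StrictAntiOn (fun x => Bfun t x) (Set.Icc (-1 : ℝ) 1) ∧
      (∀ x ∈ Set.Icc (-1 : ℝ) 1, Bfun t x ≤ Bfun t (-1)) ∧
      Bfun t (-1) = Real.log (1 + Real.sqrt (1 - Real.exp (2 * t))) - t) := by
  refine ⟨fun x _ => Bfun_zero x, fun t ht => ?_⟩
  have hanti : StrictAntiOn (Bfun t) (Icc (-1) 1) :=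
    (strictAntiOn_Bfun ht).mono Icc_subset_Iic_self
  refine ⟨hanti, fun x hx => ?_, Bfun_neg_one ht.le⟩
  exact hanti.antitoneOn ⟨le_rfl, by norm_num⟩ hx hx.1
end

section
/- Let α: ℝ → ℝ be a C² function such that h := α'' - (α')² + 1 ≥ 0 everywhere on ℝ. Then |α'(t)| ≤ 1 for all t ∈ ℝ. -/
/-!
Writing `β = α'`, the hypothesis is the Riccati inequality `β' ≥ β ^ 2 - 1`. If `β t₀ = c > 1`,
then `β' > 0` wherever `β = c`, so `β ≥ c` on `[t₀, ∞)`; there `β ^ 2 - 1 ≥ k β ^ 2` with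
`k = 1 - 1 / c ^ 2 > 0`, hence `(1 / β)' ≤ -k` and `1 / β` reaches `0` in finite time, which is
absurd. The bound `β ≥ -1` is the same statement for `t ↦ -β (-t)`.
-/

section Riccati

variable {β : ℝ → ℝ}

theorem le_of_deriv_pos_of_eq (hβ : Differentiable ℝ β) {c t₀ : ℝ} (hc : c ≤ β t₀)
    (hpos : ∀ t ≥ t₀, β t = c → 0 < deriv β t) {t : ℝ} (ht : t₀ ≤ t) : c ≤ β t :=
  image_le_of_deriv_right_lt_deriv_boundary (f := fun _ => c) continuousOn_const
    (fun _ _ => hasDerivWithinAt_const _ _ c) hc (fun x => (hβ x).hasDerivAt)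
    (fun x hx hx_eq => hpos x hx.1 hx_eq.symm) ⟨ht, le_rfl⟩

theorem not_forall_mul_sq_le_deriv (hβ : Differentiable ℝ β) {k t₀ : ℝ} (hk : 0 < k)
    (hpos : ∀ t ≥ t₀, 0 < β t) : ¬ ∀ t ≥ t₀, k * β t ^ 2 ≤ deriv β t := by
  intro hric
  have hinv : ∀ t ≥ t₀, HasDerivAt (fun s => (β s)⁻¹) (-deriv β t / β t ^ 2) t := fun t ht =>
    (hβ t).hasDerivAt.inv (hpos t ht).ne'
  set T := t₀ + (k * β t₀)⁻¹
  have hT : t₀ ≤ T := le_add_of_nonneg_right (inv_nonneg.mpr (by nlinarith [hpos t₀ le_rfl]))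
  have hB : ∀ t, HasDerivAt (fun s => (β t₀)⁻¹ - k * (s - t₀)) (-k) t := fun t => by
    simpa using ((hasDerivAt_id t).sub_const t₀).const_mul k |>.const_sub (β t₀)⁻¹
  -- `1 / β` lies below the line of slope `-k` through its value at `t₀`, which vanishes at `T`.
  have hfence := image_le_of_deriv_right_le_deriv_boundary
    (fun t ht => (hinv t ht.1).continuousAt.continuousWithinAt)
    (fun t ht => (hinv t ht.1).hasDerivWithinAt) (by simp)
    (fun t _ => (hB t).continuousAt.continuousWithinAt) (fun t _ => (hB t).hasDerivWithinAt)
    (fun t ht => by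
      have hβt := hpos t ht.1
      rw [neg_div, neg_le_neg_iff, le_div_iff₀ (by positivity)]
      exact hric t ht.1)
    ⟨hT, le_rfl⟩
  have hzero : (β t₀)⁻¹ - k * (T - t₀) = 0 := by
    have := (hpos t₀ le_rfl).ne'
    simp only [T, add_sub_cancel_left]
    field_simp
    ring
  exact (inv_pos.mpr (hpos T hT)).not_ge (hzero ▸ hfence)

theorem le_one_of_sq_sub_one_le_deriv (hβ : Differentiable ℝ β)
    (hric : ∀ t, β t ^ 2 - 1 ≤ deriv β t) (t₀ : ℝ) : β t₀ ≤ 1 := by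
  by_contra! hc
  have hge : ∀ t ≥ t₀, β t₀ ≤ β t := fun t ht =>
    le_of_deriv_pos_of_eq hβ le_rfl (fun s _ hs => by nlinarith [hric s]) ht
  refine not_forall_mul_sq_le_deriv hβ (k := 1 - 1 / β t₀ ^ 2) ?_
    (fun t ht => by linarith [hge t ht]) fun t ht => ?_
  · have : 1 / β t₀ ^ 2 < 1 := (div_lt_one (by positivity)).mpr (by nlinarith)
    linarith
  · have hsq : β t₀ ^ 2 ≤ β t ^ 2 := by nlinarith [hge t ht]
    have : β t ^ 2 / β t₀ ^ 2 ≥ 1 := (one_le_div (by positivity)).mpr hsq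
    have := hric t
    calc (1 - 1 / β t₀ ^ 2) * β t ^ 2 = β t ^ 2 - β t ^ 2 / β t₀ ^ 2 := by ring
      _ ≤ deriv β t := by linarith

theorem abs_le_one_of_sq_sub_one_le_deriv (hβ : Differentiable ℝ β)
    (hric : ∀ t, β t ^ 2 - 1 ≤ deriv β t) (t : ℝ) : |β t| ≤ 1 := by
  have hderiv : ∀ s, deriv (fun s => -β (-s)) s = deriv β (-s) := fun s => by
    rw [deriv.fun_neg, deriv_comp_neg, neg_neg]
  have hrefl := le_one_of_sq_sub_one_le_deriv (β := fun s => -β (-s))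
    (hβ.comp differentiable_neg).neg (fun s => by simpa [hderiv] using hric (-s)) (-t)
  simp only [neg_neg] at hrefl
  exact abs_le.mpr ⟨by linarith, le_one_of_sq_sub_one_le_deriv hβ hric t⟩

end Riccati

theorem stmt4 (α : ℝ → ℝ) (hα : ContDiff ℝ 2 α)
    (hconv : ∀ t : ℝ, 0 ≤ deriv (deriv α) t - (deriv α t) ^ 2 + 1) :
    ∀ t : ℝ, |deriv α t| ≤ 1 :=
  have hβ : Differentiable ℝ (deriv α) := (hα.iterate_deriv' 1 1).differentiable one_ne_zero
  abs_le_one_of_sq_sub_one_le_deriv hβ fun t => by linarith [hconv t]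
end

section
/- Fix μ > 1 and set γ = (μ² - 1)/μ. For any constant u ∈ [-1,1] with μ_u := uγ/2 + sqrt(1 + u²γ²/4), the function I_u(x,y) = (μ_u² + 1)y / ( μ_u(y² - x² + 1) - (μ_u² - 1)xy ) is a first integral of the planar system ẋ = y² + x² - 1, ẏ = 2xy + uγy², i.e., its derivative along any solution of the system vanishes identically (wherever the denominator is nonzero). -/
/-!
Along the flow, both `y` and the denominator `D` grow at the same rate: `ẏ = (2x + uγy) y` and
`Ḋ = (2x + uγy) D`. The second identity holds exactly when `μ_u² - 1 = uγ μ_u`, and `μ_u` is a root of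
this quadratic by construction. Hence `y / D` has zero derivative.
-/

theorem HasDerivAt.div_eq_zero_of_same_rate {f g : ℝ → ℝ} {a t : ℝ}
    (hf : HasDerivAt f (a * f t) t) (hg : HasDerivAt g (a * g t) t) (hg0 : g t ≠ 0) :
    HasDerivAt (fun s => f s / g s) 0 t :=
  (hf.div hg hg0).congr_deriv (by ring)

theorem add_sqrt_one_add_sq_sq_sub_one (c : ℝ) :
    (c + √(1 + c ^ 2)) ^ 2 - 1 = 2 * c * (c + √(1 + c ^ 2)) := by
  have hsq : √(1 + c ^ 2) ^ 2 = 1 + c ^ 2 := Real.sq_sqrt (by positivity)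
  linear_combination hsq

theorem hasDerivAt_firstIntegral_denom {m k : ℝ} (hk : m ^ 2 - 1 = k * m) {x y : ℝ → ℝ} {t : ℝ}
    (hx : HasDerivAt x ((y t) ^ 2 + (x t) ^ 2 - 1) t)
    (hy : HasDerivAt y (2 * x t * y t + k * (y t) ^ 2) t) :
    HasDerivAt (fun s => m * ((y s) ^ 2 - (x s) ^ 2 + 1) - (m ^ 2 - 1) * x s * y s)
      ((2 * x t + k * y t) * (m * ((y t) ^ 2 - (x t) ^ 2 + 1) - (m ^ 2 - 1) * x t * y t)) t := by
  have hD := ((((hy.pow 2).sub (hx.pow 2)).add_const 1).const_mul m).sub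
    ((hx.const_mul (m ^ 2 - 1)).mul hy)
  refine hD.congr_deriv ?_
  simp only [Nat.cast_ofNat]
  linear_combination (-(y t * ((y t) ^ 2 + (x t) ^ 2 - 1))) * hk

theorem stmt9_general (γ : ℝ)
    (u : ℝ)
    (μu : ℝ) (hμu : μu = u * γ / 2 + Real.sqrt (1 + u ^ 2 * γ ^ 2 / 4))
    (x y : ℝ → ℝ)
    (hx : ∀ t : ℝ, HasDerivAt x ((y t) ^ 2 + (x t) ^ 2 - 1) t)
    (hy : ∀ t : ℝ, HasDerivAt y (2 * x t * y t + u * γ * (y t) ^ 2) t)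
    (t : ℝ)
    (hden : μu * ((y t) ^ 2 - (x t) ^ 2 + 1) - (μu ^ 2 - 1) * x t * y t ≠ 0) :
    HasDerivAt
      (fun s => (μu ^ 2 + 1) * y s /
        (μu * ((y s) ^ 2 - (x s) ^ 2 + 1) - (μu ^ 2 - 1) * x s * y s))
      0 t := by
  have hk : μu ^ 2 - 1 = u * γ * μu := by
    have hroot := add_sqrt_one_add_sq_sq_sub_one (u * γ / 2)
    rw [show 1 + (u * γ / 2) ^ 2 = 1 + u ^ 2 * γ ^ 2 / 4 by ring, ← hμu] at hroot
    linear_combination hroot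
  have hnum : HasDerivAt (fun s => (μu ^ 2 + 1) * y s)
      ((2 * x t + u * γ * y t) * ((μu ^ 2 + 1) * y t)) t :=
    ((hy t).const_mul _).congr_deriv (by ring)
  exact hnum.div_eq_zero_of_same_rate (hasDerivAt_firstIntegral_denom hk (hx t) (hy t)) hden

theorem stmt9 (μ γ : ℝ) (hμ : 1 < μ) (hγ : γ = (μ ^ 2 - 1) / μ)
    (u : ℝ) (hu : u ∈ Set.Icc (-1 : ℝ) 1)
    (μu : ℝ) (hμu : μu = u * γ / 2 + Real.sqrt (1 + u ^ 2 * γ ^ 2 / 4))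
    (x y : ℝ → ℝ)
    (hx : ∀ t : ℝ, HasDerivAt x ((y t) ^ 2 + (x t) ^ 2 - 1) t)
    (hy : ∀ t : ℝ, HasDerivAt y (2 * x t * y t + u * γ * (y t) ^ 2) t)
    (t : ℝ)
    (hden : μu * ((y t) ^ 2 - (x t) ^ 2 + 1) - (μu ^ 2 - 1) * x t * y t ≠ 0) :
    HasDerivAt
      (fun s => (μu ^ 2 + 1) * y s /
        (μu * ((y s) ^ 2 - (x s) ^ 2 + 1) - (μu ^ 2 - 1) * x s * y s))
      0 t :=
  stmt9_general γ u μu hμu x y hx hy t hden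
end
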